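/- Let Z = S^{N-1} with uniform marginal p(z) = |Z|^{-1}, and let h : Z → Z. Then the expected cross-entropy E_{z∼p}[H(p(·|z), q_h(·|z))], where q_h(z̃|z) = C_h(z)^{-1} exp(h(z̃)ᵀh(z)/τ), equals L_align(h;τ) + L_uniform(h;τ) + log|Z|, where L_align(h;τ) = −(1/τ) E_{(z,z̃)∼p(z,z̃)}[h(z̃)ᵀh(z)] and L_uniform(h;τ) = E_{z∼p}[ log E_{z̃∼p}[ exp(h(z̃)ᵀh(z)/τ) ] ]. -/

import Mathlib

open MeasureTheory
open scoped RealInnerProductSpace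

/-!
Since `log q_h(z̃|z) = h(z̃)ᵀh(z)/τ - log C_h(z)` and `p(·|z)` is a probability density, the
inner cross-entropy is `log C_h(z) - (1/τ) E_{z̃|z}[h(z̃)ᵀh(z)]`. Averaging over the uniform
marginal gives the alignment term, and `log C_h(z) = log |Z| + log (|Z|⁻¹ C_h(z))` turns the
average of `log C_h` into the uniformity term plus `log |Z|`.
-/

/-- Inner product of two points of the unit sphere, viewed in the ambient space. -/
noncomputable def sphereIP (N : ℕ)
    (x y : Metric.sphere (0 : EuclideanSpace ℝ (Fin N)) 1) : ℝ :=
  ⟪(x : EuclideanSpace ℝ (Fin N)), (y : EuclideanSpace ℝ (Fin N))⟫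

section CrossEntropy

variable {α : Type*} [MeasurableSpace α] {μ : Measure α}

theorem neg_integral_mul_log_inv_mul_exp {p s : α → ℝ} {C : ℝ} (hC : C ≠ 0)
    (hp : ∫ x, p x ∂μ = 1) (hps : Integrable (fun x => p x * s x) μ) :
    -∫ x, p x * Real.log (C⁻¹ * Real.exp (s x)) ∂μ = Real.log C - ∫ x, p x * s x ∂μ := by
  have hpint : Integrable p μ := Integrable.of_integral_ne_zero (by simp [hp])
  have hsplit : (fun x => p x * Real.log (C⁻¹ * Real.exp (s x)))
      = fun x => p x * -Real.log C + p x * s x := by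
    funext x
    rw [Real.log_mul (inv_ne_zero hC) (Real.exp_ne_zero _), Real.log_inv, Real.log_exp]
    ring
  rw [hsplit, integral_add (hpint.mul_const _) hps, integral_mul_const, hp]
  ring

theorem integrable_log_const_mul_iff [IsFiniteMeasure μ] {g : α → ℝ} {c : ℝ} (hc : c ≠ 0)
    (hg : ∀ x, g x ≠ 0) :
    Integrable (fun x => Real.log (c * g x)) μ ↔ Integrable (fun x => Real.log (g x)) μ := by
  simp_rw [Real.log_mul hc (hg _)]
  exact integrable_const_add_iff

theorem integral_log_const_mul [IsFiniteMeasure μ] {g : α → ℝ} {c : ℝ} (hc : c ≠ 0)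
    (hg : ∀ x, g x ≠ 0) (hlog : Integrable (fun x => Real.log (g x)) μ) :
    ∫ x, Real.log (c * g x) ∂μ = μ.real Set.univ * Real.log c + ∫ x, Real.log (g x) ∂μ := by
  simp_rw [Real.log_mul hc (hg _)]
  rw [integral_add (integrable_const _) hlog, integral_const, smul_eq_mul]

end CrossEntropy

theorem stmt_16_general (N : ℕ) (τ : ℝ)
    (μ : Measure (Metric.sphere (0 : EuclideanSpace ℝ (Fin N)) 1))
    [IsFiniteMeasure μ]
    (hvol : 0 < (μ Set.univ).toReal)
    (h : Metric.sphere (0 : EuclideanSpace ℝ (Fin N)) 1 →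
         Metric.sphere (0 : EuclideanSpace ℝ (Fin N)) 1)
    (pc : Metric.sphere (0 : EuclideanSpace ℝ (Fin N)) 1 →
          Metric.sphere (0 : EuclideanSpace ℝ (Fin N)) 1 → ℝ)
    (hpc1 : ∀ z, ∫ z', pc z z' ∂μ = 1)
    (hint1 : ∀ z, Integrable (fun z' => pc z z' * sphereIP N (h z') (h z)) μ)
    (hint2 : Integrable (fun z => (μ Set.univ).toReal⁻¹ *
        ∫ z', pc z z' * sphereIP N (h z') (h z) ∂μ) μ)
    (hint3 : Integrable (fun z => (μ Set.univ).toReal⁻¹ *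
        Real.log ((μ Set.univ).toReal⁻¹ *
          ∫ z', Real.exp (sphereIP N (h z') (h z) / τ) ∂μ)) μ)
    (hCh_pos : ∀ z, 0 < ∫ z', Real.exp (sphereIP N (h z') (h z) / τ) ∂μ) :
    (∫ z, (μ Set.univ).toReal⁻¹ *
        (-∫ z', pc z z' *
            Real.log ((∫ w, Real.exp (sphereIP N (h w) (h z) / τ) ∂μ)⁻¹ *
              Real.exp (sphereIP N (h z') (h z) / τ)) ∂μ) ∂μ)
    = (-(1 / τ) * ∫ z, (μ Set.univ).toReal⁻¹ *
          (∫ z', pc z z' * sphereIP N (h z') (h z) ∂μ) ∂μ)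
      + (∫ z, (μ Set.univ).toReal⁻¹ *
          Real.log ((μ Set.univ).toReal⁻¹ *
            ∫ z', Real.exp (sphereIP N (h z') (h z) / τ) ∂μ) ∂μ)
      + Real.log (μ Set.univ).toReal := by
  set V := (μ Set.univ).toReal
  set C := fun z => ∫ z', Real.exp (sphereIP N (h z') (h z) / τ) ∂μ
  set A := fun z => ∫ z', pc z z' * sphereIP N (h z') (h z) ∂μ
  have hVinv : IsUnit V⁻¹ := (inv_pos.2 hvol).ne'.isUnit
  have hC (z) : C z ≠ 0 := (hCh_pos z).ne'
  have hA : Integrable A μ := (integrable_const_mul_iff hVinv A).1 hint2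
  have hlogC : Integrable (fun z => Real.log (C z)) μ :=
    (integrable_log_const_mul_iff hVinv.ne_zero hC).1 ((integrable_const_mul_iff hVinv _).1 hint3)
  have hinner (z) : -∫ z', pc z z' * Real.log ((C z)⁻¹ *
      Real.exp (sphereIP N (h z') (h z) / τ)) ∂μ = Real.log (C z) - (1 / τ) * A z := by
    have hint1τ := (hint1 z).div_const τ
    simp_rw [mul_div_assoc] at hint1τ
    rw [neg_integral_mul_log_inv_mul_exp (hC z) (hpc1 z) hint1τ]
    simp_rw [← mul_div_assoc, integral_div]
    ring
  rw [integral_congr_ae (.of_forall fun z => congrArg (V⁻¹ * ·) (hinner z)),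
    integral_const_mul, integral_const_mul, integral_const_mul, integral_sub hlogC (hA.const_mul _), integral_const_mul,
    integral_log_const_mul hVinv.ne_zero hC hlogC, Real.log_inv, measureReal_def]
  field_simp
  ring

/-- with a uniform marginal on the sphere, the expected
cross-entropy between the conditional p(·|z) and the model conditional
q_h(·|z) ∝ exp(h(z')ᵀh(z)/τ) equals L_align + L_uniform + log |Z|. -/
theorem stmt_16 (N : ℕ) (τ : ℝ) (hτ : 0 < τ)
    (μ : Measure (Metric.sphere (0 : EuclideanSpace ℝ (Fin N)) 1))
    [IsFiniteMeasure μ]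
    (hvol : 0 < (μ Set.univ).toReal)
    (h : Metric.sphere (0 : EuclideanSpace ℝ (Fin N)) 1 →
         Metric.sphere (0 : EuclideanSpace ℝ (Fin N)) 1)
    (pc : Metric.sphere (0 : EuclideanSpace ℝ (Fin N)) 1 →
          Metric.sphere (0 : EuclideanSpace ℝ (Fin N)) 1 → ℝ)
    (hpc_nonneg : ∀ z z', 0 ≤ pc z z')
    (hpc1 : ∀ z, ∫ z', pc z z' ∂μ = 1)
    (hint1 : ∀ z, Integrable (fun z' => pc z z' * sphereIP N (h z') (h z)) μ)
    (hint2 : Integrable (fun z => (μ Set.univ).toReal⁻¹ *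
        ∫ z', pc z z' * sphereIP N (h z') (h z) ∂μ) μ)
    (hint3 : Integrable (fun z => (μ Set.univ).toReal⁻¹ *
        Real.log ((μ Set.univ).toReal⁻¹ *
          ∫ z', Real.exp (sphereIP N (h z') (h z) / τ) ∂μ)) μ)
    (hCh_pos : ∀ z, 0 < ∫ z', Real.exp (sphereIP N (h z') (h z) / τ) ∂μ) :
    (∫ z, (μ Set.univ).toReal⁻¹ *
        (-∫ z', pc z z' *
            Real.log ((∫ w, Real.exp (sphereIP N (h w) (h z) / τ) ∂μ)⁻¹ *
              Real.exp (sphereIP N (h z') (h z) / τ)) ∂μ) ∂μ)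
    = (-(1 / τ) * ∫ z, (μ Set.univ).toReal⁻¹ *
          (∫ z', pc z z' * sphereIP N (h z') (h z) ∂μ) ∂μ)
      + (∫ z, (μ Set.univ).toReal⁻¹ *
          Real.log ((μ Set.univ).toReal⁻¹ *
            ∫ z', Real.exp (sphereIP N (h z') (h z) / τ) ∂μ) ∂μ)
      + Real.log (μ Set.univ).toReal :=
  stmt_16_general N τ μ hvol h pc hpc1 hint1 hint2 hint3 hCh_pos
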